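/- arXiv:2307.13477 — 3 statements merged into one kernel-verified Lean document; each statement's English description precedes it below -/
import Mathlib

section
/- There exist real numbers θ and γ₁ with 0 < γ₁ ≤ 1 such that both 3/2 + (1/4)(γ₁ sin θ + cos θ) ≥ 1.7640 and 3/2 − (1 − √(1−γ₁²))/8 + (1/8)(sin θ + cos θ (1 + √(1−γ₁²))) ≥ 1.7640. In particular θ = 0.411, γ₁ = 0.349 works. -/
open Real

private lemma dbl_sin_lb {s c a d : ℝ} (hs : a ≤ s) (hc : d ≤ c) (ha : 0 ≤ a) (hd : 0 ≤ d) :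
    2 * a * d ≤ 2 * s * c := by
  have := mul_le_mul hs hc hd (le_trans ha hs)
  linarith

private lemma dbl_sin_ub {s c b e : ℝ} (hs : s ≤ b) (hc : c ≤ e) (hs0 : 0 ≤ s) (hc0 : 0 ≤ c) :
    2 * s * c ≤ 2 * b * e := by
  have := mul_le_mul hs hc hc0 (le_trans hs0 hs)
  linarith

private lemma dbl_cos_lb {c d : ℝ} (hc : d ≤ c) (hd : 0 ≤ d) :
    2 * d ^ 2 - 1 ≤ 2 * c ^ 2 - 1 := by
  have := pow_le_pow_left₀ hd hc 2
  linarith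

private lemma dbl_cos_ub {c e : ℝ} (hc : c ≤ e) (hc0 : 0 ≤ c) :
    2 * c ^ 2 - 1 ≤ 2 * e ^ 2 - 1 := by
  have := pow_le_pow_left₀ hc0 hc 2
  linarith

set_option maxHeartbeats 1600000 in
theorem exists_params_min_violation_ge :
    ∃ θ γ₁ : ℝ, 0 < γ₁ ∧ γ₁ ≤ 1 ∧
      3 / 2 + (1 / 4) * (γ₁ * Real.sin θ + Real.cos θ) ≥ 1.7640 ∧
      3 / 2 - (1 - Real.sqrt (1 - γ₁ ^ 2)) / 8
        + (1 / 8) * (Real.sin θ + Real.cos θ * (1 + Real.sqrt (1 - γ₁ ^ 2))) ≥ 1.7640 := by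
  have hq : |(0.051375 : ℝ)| ≤ 1 := by rw [abs_of_nonneg] <;> norm_num
  have hs := abs_le.mp (Real.sin_bound hq)
  have hc := abs_le.mp (Real.cos_bound hq)
  rw [abs_of_nonneg (by norm_num : (0:ℝ) ≤ 0.051375)] at hs hc
  have s1lo : (0.0513520373 : ℝ) ≤ Real.sin 0.051375 := by nlinarith [hs.1]
  have s1hi : Real.sin 0.051375 ≤ 0.0513527631 := by nlinarith [hs.2]
  have c1lo : (0.9986799418 : ℝ) ≤ Real.cos 0.051375 := by nlinarith [hc.1]
  have c1hi : Real.cos 0.051375 ≤ 0.9986806676 := by nlinarith [hc.2]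
  have e2s : Real.sin 0.10275 = 2 * Real.sin 0.051375 * Real.cos 0.051375 := by
    rw [show (0.10275 : ℝ) = 2 * 0.051375 by norm_num, Real.sin_two_mul]
  have e2c : Real.cos 0.10275 = 2 * Real.cos 0.051375 ^ 2 - 1 := by
    rw [show (0.10275 : ℝ) = 2 * 0.051375 by norm_num, Real.cos_two_mul]
  have s2lo : (0.1025684992 : ℝ) ≤ Real.sin 0.10275 := by
    rw [e2s]
    calc (0.1025684992 : ℝ) ≤ 2 * 0.0513520373 * 0.9986799418 := by norm_num
    _ ≤ _ := dbl_sin_lb s1lo c1lo (by norm_num) (by norm_num)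
  have s2hi : Real.sin 0.10275 ≤ 0.1025700235 := by
    rw [e2s]
    calc 2 * Real.sin 0.051375 * Real.cos 0.051375
        ≤ 2 * 0.0513527631 * 0.9986806676 :=
          dbl_sin_ub s1hi c1hi (by linarith) (by linarith)
    _ ≤ 0.1025700235 := by norm_num
  have c2lo : (0.9947232523 : ℝ) ≤ Real.cos 0.10275 := by
    rw [e2c]
    calc (0.9947232523 : ℝ) ≤ 2 * (0.9986799418:ℝ) ^ 2 - 1 := by norm_num
    _ ≤ _ := dbl_cos_lb c1lo (by norm_num)
  have c2hi : Real.cos 0.10275 ≤ 0.9947261517 := by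
    rw [e2c]
    calc 2 * Real.cos 0.051375 ^ 2 - 1 ≤ 2 * (0.9986806676:ℝ) ^ 2 - 1 :=
          dbl_cos_ub c1hi (by linarith)
    _ ≤ 0.9947261517 := by norm_num
  have e3s : Real.sin 0.2055 = 2 * Real.sin 0.10275 * Real.cos 0.10275 := by
    rw [show (0.2055 : ℝ) = 2 * 0.10275 by norm_num, Real.sin_two_mul]
  have e3c : Real.cos 0.2055 = 2 * Real.cos 0.10275 ^ 2 - 1 := by
    rw [show (0.2055 : ℝ) = 2 * 0.10275 by norm_num, Real.cos_two_mul]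
  have s3lo : (0.2040545422 : ℝ) ≤ Real.sin 0.2055 := by
    rw [e3s]
    calc (0.2040545422 : ℝ) ≤ 2 * 0.1025684992 * 0.9947232523 := by norm_num
    _ ≤ _ := dbl_sin_lb s2lo c2lo (by norm_num) (by norm_num)
  have s3hi : Real.sin 0.2055 ≤ 0.2040581696 := by
    rw [e3s]
    calc 2 * Real.sin 0.10275 * Real.cos 0.10275
        ≤ 2 * 0.1025700235 * 0.9947261517 :=
          dbl_sin_ub s2hi c2hi (by linarith) (by linarith)
    _ ≤ 0.2040581696 := by norm_num
  have c3lo : (0.9789486973 : ℝ) ≤ Real.cos 0.2055 := by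
    rw [e3c]
    calc (0.9789486973 : ℝ) ≤ 2 * (0.9947232523:ℝ) ^ 2 - 1 := by norm_num
    _ ≤ _ := dbl_cos_lb c2lo (by norm_num)
  have c3hi : Real.cos 0.2055 ≤ 0.9789602338 := by
    rw [e3c]
    calc 2 * Real.cos 0.10275 ^ 2 - 1 ≤ 2 * (0.9947261517:ℝ) ^ 2 - 1 :=
          dbl_cos_ub c2hi (by linarith)
    _ ≤ 0.9789602338 := by norm_num
  have e4s : Real.sin 0.411 = 2 * Real.sin 0.2055 * Real.cos 0.2055 := by
    rw [show (0.411 : ℝ) = 2 * 0.2055 by norm_num, Real.sin_two_mul]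
  have e4c : Real.cos 0.411 = 2 * Real.cos 0.2055 ^ 2 - 1 := by
    rw [show (0.411 : ℝ) = 2 * 0.2055 by norm_num, Real.cos_two_mul]
  have s4lo : (0.3995178565 : ℝ) ≤ Real.sin 0.411 := by
    rw [e4s]
    calc (0.3995178565 : ℝ) ≤ 2 * 0.2040545422 * 0.9789486973 := by norm_num
    _ ≤ _ := dbl_sin_lb s3lo c3lo (by norm_num) (by norm_num)
  have c4lo : (0.9166811038 : ℝ) ≤ Real.cos 0.411 := by
    rw [e4c]
    calc (0.9166811038 : ℝ) ≤ 2 * (0.9789486973:ℝ) ^ 2 - 1 := by norm_num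
    _ ≤ _ := dbl_cos_lb c3lo (by norm_num)
  have hsq : (0.93712 : ℝ) ≤ Real.sqrt (1 - (0.349:ℝ) ^ 2) := by
    rw [show (0.93712:ℝ) = Real.sqrt (0.93712 ^ 2) by rw [Real.sqrt_sq (by norm_num)]]
    exact Real.sqrt_le_sqrt (by norm_num)
  have hsq1 : Real.sqrt (1 - (0.349:ℝ) ^ 2) ≤ 1 := by
    rw [show (1:ℝ) = Real.sqrt 1 by simp]
    exact Real.sqrt_le_sqrt (by norm_num)
  refine ⟨0.411, 0.349, by norm_num, by norm_num, by nlinarith, by nlinarith⟩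
end

section
/- If θ = γ₁ and I¹(θ,γ₁) = I²(θ,γ₁), then θ = γ₁ ≈ 0.3312 and the common value I¹ = I² ≈ 1.7633 exceeds 7/4, where I¹(θ,γ₁) = 3/2 + (1/4)(γ₁ sin θ + cos θ) and I²(θ,γ₁) = 3/2 − (1 − √(1−γ₁²))/8 + (1/8)(sin θ + cos θ(1 + √(1−γ₁²))). More precisely: there exists θ ∈ (0,1) with I¹(θ,θ)=I²(θ,θ) > 7/4. -/
/-!
The gap `I¹ - I²` factors as `((2γ - 1) sin θ + (1 + cos θ)(1 - √(1 - γ²))) / 8`. On the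
diagonal `γ = θ` it is negative at `θ = 1/4` (where `sin θ` dominates the tiny `1 - √(15/16)`)
and positive at `θ = 1/2` (where the first term vanishes), so it has a zero in between.
There `I¹ > 7/4`, because the Taylor bounds for `sin` and `cos` give
`θ sin θ + cos θ > 1 + θ²/2 - θ⁴/6 > 1`.
-/

open Real

noncomputable def roundOneValue (θ γ : ℝ) : ℝ :=
  3 / 2 + (1 / 4) * (γ * sin θ + cos θ)

noncomputable def roundTwoValue (θ γ : ℝ) : ℝ :=
  3 / 2 - (1 - √(1 - γ ^ 2)) / 8 + (1 / 8) * (sin θ + cos θ * (1 + √(1 - γ ^ 2)))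

theorem roundOneValue_sub_roundTwoValue (θ γ : ℝ) :
    roundOneValue θ γ - roundTwoValue θ γ =
      ((2 * γ - 1) * sin θ + (1 + cos θ) * (1 - √(1 - γ ^ 2))) / 8 := by
  unfold roundOneValue roundTwoValue
  ring

theorem continuous_roundOneValue_sub_roundTwoValue_diag :
    Continuous fun θ => roundOneValue θ θ - roundTwoValue θ θ := by
  unfold roundOneValue roundTwoValue
  fun_prop

theorem roundOneValue_lt_roundTwoValue_quarter :
    roundOneValue (1 / 4) (1 / 4) < roundTwoValue (1 / 4) (1 / 4) := by
  rw [← sub_neg, roundOneValue_sub_roundTwoValue]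
  have hsqrt : 24 / 25 ≤ √(1 - (1 / 4 : ℝ) ^ 2) :=
    (le_sqrt (by norm_num) (by norm_num)).2 (by norm_num)
  have hsin : 1 / 4 - (1 / 4) ^ 3 / 6 < sin (1 / 4 : ℝ) := sin_gt_sub_cube (by norm_num)
  have hcos : 0 ≤ 1 - cos (1 / 4 : ℝ) := sub_nonneg.2 (cos_le_one _)
  have hcos' : 0 ≤ 1 + cos (1 / 4 : ℝ) := by linarith [neg_one_le_cos (1 / 4 : ℝ)]
  nlinarith [mul_nonneg hcos (sub_nonneg.2 hsqrt), mul_nonneg hcos' (sub_nonneg.2 hsqrt)]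

theorem roundTwoValue_lt_roundOneValue_half :
    roundTwoValue (1 / 2) (1 / 2) < roundOneValue (1 / 2) (1 / 2) := by
  rw [← sub_pos, roundOneValue_sub_roundTwoValue]
  have hsqrt : √(1 - (1 / 2 : ℝ) ^ 2) < 1 := by
    rw [sqrt_lt' one_pos]
    norm_num
  have hcos : 0 < cos (1 / 2 : ℝ) :=
    cos_pos_of_mem_Ioo ⟨by linarith [pi_gt_three], by linarith [pi_gt_three]⟩
  have hprod : 0 < (1 + cos (1 / 2 : ℝ)) * (1 - √(1 - (1 / 2 : ℝ) ^ 2)) :=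
    mul_pos (by linarith) (sub_pos.2 hsqrt)
  norm_num at hprod ⊢
  linarith

theorem one_lt_mul_sin_add_cos {θ : ℝ} (hθ : 0 < θ) (hθ3 : θ ^ 2 < 3) :
    1 < θ * sin θ + cos θ := by
  have hsin : θ - θ ^ 3 / 6 < sin θ := sin_gt_sub_cube hθ
  have hcos : 1 - θ ^ 2 / 2 < cos θ := one_sub_sq_div_two_lt_cos hθ.ne'
  nlinarith [mul_lt_mul_of_pos_left hsin hθ, mul_pos (pow_pos hθ 2) (sub_pos.2 hθ3)]

theorem seven_fourths_lt_roundOneValue_diag {θ : ℝ} (hθ : 0 < θ) (hθ3 : θ ^ 2 < 3) :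
    7 / 4 < roundOneValue θ θ := by
  unfold roundOneValue
  linarith [one_lt_mul_sin_add_cos hθ hθ3]

theorem exists_symmetric_equal_violation :
    ∃ θ : ℝ, θ ∈ Set.Ioo (0 : ℝ) 1 ∧
      3 / 2 + (1 / 4) * (θ * Real.sin θ + Real.cos θ) =
        3 / 2 - (1 - Real.sqrt (1 - θ ^ 2)) / 8
          + (1 / 8) * (Real.sin θ + Real.cos θ * (1 + Real.sqrt (1 - θ ^ 2))) ∧
      3 / 2 + (1 / 4) * (θ * Real.sin θ + Real.cos θ) > 7 / 4 := by
  obtain ⟨θ, ⟨hθ_lo, hθ_hi⟩, hgap⟩ :=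
    intermediate_value_Ioo (by norm_num : (1 / 4 : ℝ) ≤ 1 / 2)
      continuous_roundOneValue_sub_roundTwoValue_diag.continuousOn
      ⟨sub_neg.2 roundOneValue_lt_roundTwoValue_quarter,
        sub_pos.2 roundTwoValue_lt_roundOneValue_half⟩
  exact ⟨θ, ⟨by linarith, by linarith⟩, sub_eq_zero.1 hgap,
    seven_fourths_lt_roundOneValue_diag (by linarith) (by nlinarith)⟩
end

section
/- For every n ≥ 1 there exist θ ∈ (0, π/4) and γ₁,…,γ_n ∈ (0,1] such that for all 1 ≤ k ≤ n, 1 + (1/2)(∏_{j=1}^{k−1}(3+√(1−γ_j²))/4 − 1) + 1/2 + (1/8)·2^{2−k}(γ_k sin θ + cos θ ∏_{j=1}^{k−1}(1+√(1−γ_j²))) > 7/4. -/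
/-!
A measurement of sharpness `γ` disturbs the state by at most `1 - √(1 - γ²) ≤ γ²`, so the round
`m + 1` value exceeds `7/4` by at least `(γ_{m+1} sin θ - 2^m (∑_{j ≤ m} γ_j² + θ²/2)) / 2^(m+2)`.
Taking `γ_j = w_j θ` with `w_k = 2^k (1 + ∑_{j<k} w_j²)`, the gain `γ_{m+1} sin θ ≥ w_{m+1} θ²/2`
beats the loss `2^m (∑_{j ≤ m} w_j² + 1/2) θ²` in every round, and `θ = 1/(4 w_n)` keeps every
`γ_k ≤ 1`.
-/

open Real Finset

theorem Finset.one_sub_sum_le_prod_one_sub {ι R : Type*} [CommRing R] [LinearOrder R]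
    [IsStrictOrderedRing R] (s : Finset ι) {f : ι → R} (h0 : ∀ i ∈ s, 0 ≤ f i)
    (h1 : ∀ i ∈ s, f i ≤ 1) : 1 - ∑ i ∈ s, f i ≤ ∏ i ∈ s, (1 - f i) := by
  induction s using Finset.cons_induction with
  | empty => simp
  | cons a s _ ih =>
    simp only [forall_mem_cons] at h0 h1
    rw [sum_cons, prod_cons]
    have hsum : 0 ≤ ∑ i ∈ s, f i := sum_nonneg h0.2
    calc 1 - (f a + ∑ i ∈ s, f i) ≤ (1 - f a) * (1 - ∑ i ∈ s, f i) := by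
          nlinarith [mul_nonneg h0.1 hsum]
      _ ≤ (1 - f a) * ∏ i ∈ s, (1 - f i) :=
          mul_le_mul_of_nonneg_left (ih h0.2 h1.2) (sub_nonneg.2 h1.1)

lemma sqrt_one_sub_sq_le_one (γ : ℝ) : √(1 - γ ^ 2) ≤ 1 :=
  Real.sqrt_le_one.2 (by nlinarith [sq_nonneg γ])

lemma one_sub_sqrt_one_sub_sq_le (γ : ℝ) : 1 - √(1 - γ ^ 2) ≤ γ ^ 2 := by
  rcases le_total (1 - γ ^ 2) 0 with h | h
  · rw [Real.sqrt_eq_zero_of_nonpos h]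
    linarith
  · have : 1 - γ ^ 2 ≤ √(1 - γ ^ 2) := Real.le_sqrt_self_iff.2 (by nlinarith [sq_nonneg γ])
    linarith

section SharpnessProducts

variable {ι : Type*} (s : Finset ι) (γ : ι → ℝ)

lemma one_sub_sum_sq_div_le_prod {c : ℝ} (hc : 1 ≤ c) :
    1 - (∑ i ∈ s, γ i ^ 2) / c ≤ ∏ i ∈ s, (1 - (1 - √(1 - γ i ^ 2)) / c) := by
  have hc0 : 0 < c := by linarith
  calc 1 - (∑ i ∈ s, γ i ^ 2) / c ≤ 1 - ∑ i ∈ s, (1 - √(1 - γ i ^ 2)) / c := by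
        rw [sum_div]
        gcongr with i
        exact one_sub_sqrt_one_sub_sq_le _
    _ ≤ _ := one_sub_sum_le_prod_one_sub s
        (fun i _ => div_nonneg (sub_nonneg.2 (sqrt_one_sub_sq_le_one _)) hc0.le)
        (fun i _ => (div_le_one hc0).2 (by linarith [Real.sqrt_nonneg (1 - γ i ^ 2)]))

lemma one_sub_sum_sq_div_four_le_prod :
    1 - (∑ i ∈ s, γ i ^ 2) / 4 ≤ ∏ i ∈ s, (3 + √(1 - γ i ^ 2)) / 4 := by
  convert one_sub_sum_sq_div_le_prod s γ (by norm_num : (1 : ℝ) ≤ 4) using 2 with i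
  ring

lemma two_pow_card_mul_le_prod :
    2 ^ #s * (1 - (∑ i ∈ s, γ i ^ 2) / 2) ≤ ∏ i ∈ s, (1 + √(1 - γ i ^ 2)) :=
  calc 2 ^ #s * (1 - (∑ i ∈ s, γ i ^ 2) / 2)
      ≤ 2 ^ #s * ∏ i ∈ s, (1 - (1 - √(1 - γ i ^ 2)) / 2) := by
        gcongr
        exact one_sub_sum_sq_div_le_prod s γ one_le_two
    _ = ∏ i ∈ s, (1 + √(1 - γ i ^ 2)) := by
        rw [← prod_const, ← prod_mul_distrib]
        exact prod_congr rfl fun i _ => by ring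

lemma prod_one_add_sqrt_one_sub_sq_le : ∏ i ∈ s, (1 + √(1 - γ i ^ 2)) ≤ 2 ^ #s :=
  calc ∏ i ∈ s, (1 + √(1 - γ i ^ 2)) ≤ ∏ _i ∈ s, (2 : ℝ) :=
        prod_le_prod (fun i _ => by positivity)
          (fun i _ => by linarith [sqrt_one_sub_sq_le_one (γ i)])
    _ = 2 ^ #s := prod_const 2

end SharpnessProducts

/-- The lower bound on the round-`k` quantum value `I_Q^k`, for Charlie's angle `θ` and Bob `j`'s
sharpness `γ j`. -/
noncomputable def roundValue (θ : ℝ) (γ : ℕ → ℝ) (k : ℕ) : ℝ :=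
  1 + (1 / 2) * ((∏ j ∈ Icc 1 (k - 1), (3 + √(1 - γ j ^ 2)) / 4) - 1)
    + 1 / 2 + (1 / 8) * (2 : ℝ) ^ ((2 : ℤ) - (k : ℤ)) *
      (γ k * sin θ + cos θ * ∏ j ∈ Icc 1 (k - 1), (1 + √(1 - γ j ^ 2)))

lemma roundValue_succ_sub_ge (θ : ℝ) (γ : ℕ → ℝ) (m : ℕ) :
    (γ (m + 1) * sin θ - 2 ^ m * (∑ j ∈ Icc 1 m, γ j ^ 2 + θ ^ 2 / 2)) / 2 ^ (m + 2)
      ≤ roundValue θ γ (m + 1) - 7 / 4 := by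
  have hcard : #(Icc 1 m) = m := by simp
  have hP := one_sub_sum_sq_div_four_le_prod (Icc 1 m) γ
  have hQ := two_pow_card_mul_le_prod (Icc 1 m) γ
  have hQ' := prod_one_add_sqrt_one_sub_sq_le (Icc 1 m) γ
  rw [hcard] at hQ hQ'
  have hcoef : (1 / 8 : ℝ) * 2 ^ ((2 : ℤ) - ((m + 1 : ℕ) : ℤ)) = 1 / 2 ^ (m + 2) := by
    rw [show (2 : ℤ) - ((m + 1 : ℕ) : ℤ) = 1 - m by push_cast; ring,
      zpow_sub₀ two_ne_zero, zpow_one, zpow_natCast]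
    field_simp
    ring
  unfold roundValue
  rw [Nat.add_sub_cancel, hcoef]
  set S := ∑ j ∈ Icc 1 m, γ j ^ 2
  set P := ∏ j ∈ Icc 1 m, (3 + √(1 - γ j ^ 2)) / 4
  set Q := ∏ j ∈ Icc 1 m, (1 + √(1 - γ j ^ 2))
  have hE : (0 : ℝ) < 2 ^ m := by positivity
  -- `cos θ * Q = Q - (1 - cos θ) * Q`, with `1 - cos θ ≤ θ² / 2` and `Q ≤ 2^m`.
  have hcosQ : 2 ^ m * (1 - S / 2 - θ ^ 2 / 2) ≤ cos θ * Q := by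
    nlinarith [mul_le_mul_of_nonneg_left hQ' (sub_nonneg.2 (cos_le_one θ)),
      one_sub_sq_div_two_le_cos (x := θ)]
  have key : γ (m + 1) * sin θ - 2 ^ m * (S + θ ^ 2 / 2)
      ≤ 4 * 2 ^ m * ((P - 1) / 2 - 1 / 4) + (γ (m + 1) * sin θ + cos θ * Q) := by
    nlinarith [mul_le_mul_of_nonneg_left hP hE.le]
  calc _ ≤ (4 * 2 ^ m * ((P - 1) / 2 - 1 / 4) + (γ (m + 1) * sin θ + cos θ * Q)) / 2 ^ (m + 2) :=
        div_le_div_of_nonneg_right key (by positivity)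
    _ = _ := by field_simp; ring

lemma div_two_le_sin {x : ℝ} (hx : 0 ≤ x) (hx' : x ≤ π / 2) : x / 2 ≤ sin x :=
  calc x / 2 ≤ 2 / π * x := by
        rw [div_mul_eq_mul_div, le_div_iff₀ pi_pos]
        nlinarith [pi_le_four]
    _ ≤ sin x := mul_le_sin hx hx'

/-- The recursion is `w_k = 2^k (1 + ∑_{j<k} w_j²)` solved for `w_{k+1}` (`sharpnessWeight_eq`). -/
noncomputable def sharpnessWeight : ℕ → ℝ
  | 0 => 1
  | k + 1 => 2 * sharpnessWeight k * (1 + 2 ^ k * sharpnessWeight k)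

lemma sharpnessWeight_eq (k : ℕ) :
    sharpnessWeight k = 2 ^ k * (1 + ∑ j ∈ range k, sharpnessWeight j ^ 2) := by
  induction k with
  | zero => simp [sharpnessWeight]
  | succ k ih =>
    rw [sharpnessWeight, sum_range_succ, pow_succ]
    linear_combination 2 * ih

lemma sharpnessWeight_pos (k : ℕ) : 0 < sharpnessWeight k := by
  rw [sharpnessWeight_eq]
  positivity

lemma sharpnessWeight_mono : Monotone sharpnessWeight := by
  refine monotone_nat_of_le_succ fun k => ?_
  have hw := sharpnessWeight_pos k
  have h2 : (0 : ℝ) < 2 ^ k := by positivity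
  rw [sharpnessWeight]
  nlinarith [mul_pos h2 hw]

lemma one_le_sharpnessWeight (k : ℕ) : 1 ≤ sharpnessWeight k :=
  sharpnessWeight_mono (Nat.zero_le k)

lemma seven_fourths_lt_roundValue {θ : ℝ} (hθ0 : 0 < θ) (hθ : θ ≤ π / 2) (m : ℕ) :
    7 / 4 < roundValue θ (fun j => sharpnessWeight j * θ) (m + 1) := by
  have hrec := sharpnessWeight_eq (m + 1)
  set w := sharpnessWeight
  have hsub : ∑ j ∈ Icc 1 m, w j ^ 2 ≤ ∑ j ∈ range (m + 1), w j ^ 2 :=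
    sum_le_sum_of_subset_of_nonneg (fun j hj => by simp only [mem_Icc, mem_range] at hj ⊢; omega)
      (fun j _ _ => sq_nonneg _)
  have hviol : 2 ^ m * (∑ j ∈ Icc 1 m, (w j * θ) ^ 2 + θ ^ 2 / 2) < w (m + 1) * θ * sin θ :=
    calc 2 ^ m * (∑ j ∈ Icc 1 m, (w j * θ) ^ 2 + θ ^ 2 / 2)
        < 2 ^ m * ((1 + ∑ j ∈ range (m + 1), w j ^ 2) * θ ^ 2) := by
          simp only [mul_pow, ← sum_mul]
          gcongr
          nlinarith [pow_pos hθ0 2]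
      _ = w (m + 1) * θ * (θ / 2) := by rw [hrec]; ring
      _ ≤ w (m + 1) * θ * sin θ := by
          gcongr
          · exact mul_nonneg (sharpnessWeight_pos _).le hθ0.le
          · exact div_two_le_sin hθ0.le hθ
  have hbound := roundValue_succ_sub_ge θ (fun j => w j * θ) m
  have hgap : 0 < (w (m + 1) * θ * sin θ - 2 ^ m * (∑ j ∈ Icc 1 m, (w j * θ) ^ 2 + θ ^ 2 / 2))
      / 2 ^ (m + 2) :=
    div_pos (by linarith) (by positivity)
  linarith

theorem arbitrarily_many_sequential_violations_general (n : ℕ) :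
    ∃ θ : ℝ, θ ∈ Set.Ioo 0 (Real.pi / 4) ∧
    ∃ γ : ℕ → ℝ, (∀ k, 1 ≤ k → k ≤ n → γ k ∈ Set.Ioc (0 : ℝ) 1) ∧
      ∀ k, 1 ≤ k → k ≤ n →
        1 + (1 / 2) * ((∏ j ∈ Finset.Icc 1 (k - 1), (3 + Real.sqrt (1 - γ j ^ 2)) / 4) - 1)
          + 1 / 2 + (1 / 8) * (2 : ℝ) ^ ((2 : ℤ) - (k : ℤ)) *
            (γ k * Real.sin θ +
              Real.cos θ * ∏ j ∈ Finset.Icc 1 (k - 1), (1 + Real.sqrt (1 - γ j ^ 2)))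
          > 7 / 4 := by
  set θ := (4 * sharpnessWeight n)⁻¹
  have hθ0 : 0 < θ := by have := sharpnessWeight_pos n; positivity
  have hθ : θ ≤ 1 / 4 := by
    rw [inv_le_comm₀ (by linarith [one_le_sharpnessWeight n]) (by norm_num)]
    linarith [one_le_sharpnessWeight n]
  refine ⟨θ, ⟨hθ0, by linarith [pi_gt_three]⟩, fun j => sharpnessWeight j * θ,
    fun k _ hk => ⟨mul_pos (sharpnessWeight_pos k) hθ0, ?_⟩, fun k hk _ => ?_⟩
  · calc sharpnessWeight k * θ ≤ sharpnessWeight n * θ := by gcongr; exact sharpnessWeight_mono hk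
      _ ≤ 1 := by
        have := sharpnessWeight_pos n
        simp only [θ]
        field_simp
        norm_num
  · obtain ⟨m, rfl⟩ := Nat.exists_eq_add_of_le' hk
    exact seven_fourths_lt_roundValue hθ0 (by linarith [pi_gt_three]) m

theorem arbitrarily_many_sequential_violations (n : ℕ) (hn : 1 ≤ n) :
    ∃ θ : ℝ, θ ∈ Set.Ioo 0 (Real.pi / 4) ∧
    ∃ γ : ℕ → ℝ, (∀ k, 1 ≤ k → k ≤ n → γ k ∈ Set.Ioc (0 : ℝ) 1) ∧
      ∀ k, 1 ≤ k → k ≤ n →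
        1 + (1 / 2) * ((∏ j ∈ Finset.Icc 1 (k - 1), (3 + Real.sqrt (1 - γ j ^ 2)) / 4) - 1)
          + 1 / 2 + (1 / 8) * (2 : ℝ) ^ ((2 : ℤ) - (k : ℤ)) *
            (γ k * Real.sin θ +
              Real.cos θ * ∏ j ∈ Finset.Icc 1 (k - 1), (1 + Real.sqrt (1 - γ j ^ 2)))
          > 7 / 4 :=
  arbitrarily_many_sequential_violations_general n
end
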